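/- arXiv:2212.12384 — 4 statements merged into one kernel-verified Lean document; each statement's English description precedes it below -/
import Mathlib

section
/- If f : ℝⁿ → ℝ is L-smooth and μ-strongly convex with 0 ≤ μ < L, then for all x, y: f(x) - f(y) - ⟨∇f(y), x - y⟩ ≥ (1/(2(1 - μ/L))) ( (1/L)‖∇f(x) - ∇f(y)‖² + μ‖x - y‖² - (2μ/L)⟨∇f(y) - ∇f(x), y - x⟩ ). -/
open RealInnerProductSpace

section Aux

variable {E : Type*} [NormedAddCommGroup E] [InnerProductSpace ℝ E] [CompleteSpace E]

lemma aux_inner_grad (c w : E) : HasGradientAt (fun z => ⟪c, z⟫) c w := by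
  rw [hasGradientAt_iff_hasFDerivAt]
  have : HasFDerivAt (fun z => ⟪c, z⟫) (innerSL ℝ c) w := (innerSL ℝ c).hasFDerivAt
  refine this.congr_fderiv ?_
  ext z
  simp [InnerProductSpace.toDual_apply_apply]

lemma aux_line_deriv (h : E → ℝ) (G : E → E) (hg : ∀ w, HasGradientAt h (G w) w)
    (x v : E) (t : ℝ) : HasDerivAt (fun s : ℝ => h (x + s • v)) ⟪G (x + t • v), v⟫ t := by
  have h1 : HasDerivAt (fun s : ℝ => x + s • v) v t := by
    simpa using ((hasDerivAt_id t).smul_const v).const_add x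
  have h2 := (hg (x + t • v)).hasFDerivAt
  have := h2.comp_hasDerivAt t h1
  simpa [InnerProductSpace.toDual_apply_apply, Function.comp_def] using this

lemma aux_grad_ineq (h : E → ℝ) (G : E → E) (hconv : ConvexOn ℝ Set.univ h)
    (hg : ∀ w, HasGradientAt h (G w) w) (x y : E) :
    h x + ⟪G x, y - x⟫ ≤ h y := by
  set v := y - x with hv
  have hφconv : ConvexOn ℝ Set.univ (fun t : ℝ => h (x + t • v)) := by
    refine ⟨convex_univ, ?_⟩
    intro t1 _ t2 _ a b ha hb hab
    have key : x + (a * t1 + b * t2) • v = a • (x + t1 • v) + b • (x + t2 • v) := by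
      have : a • (x + t1 • v) + b • (x + t2 • v) = (a + b) • x + (a * t1 + b * t2) • v := by
        module
      rw [this, hab, one_smul]
    have := hconv.2 (Set.mem_univ (x + t1 • v)) (Set.mem_univ (x + t2 • v)) ha hb hab
    simpa [key] using this
  have hder : HasDerivAt (fun t : ℝ => h (x + t • v)) ⟪G x, v⟫ 0 := by
    have := aux_line_deriv h G hg x v 0
    simpa using this
  have := hφconv.le_slope_of_hasDerivAt (Set.mem_univ 0) (Set.mem_univ 1) zero_lt_one hder
  have hslope : slope (fun t : ℝ => h (x + t • v)) 0 1 = h y - h x := by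
    rw [slope_def_field]
    have e1 : x + v = y := by rw [hv]; abel
    simp [e1]
  rw [hslope] at this
  linarith

lemma aux_descent (h : E → ℝ) (G : E → E) (C : ℝ) (hC : 0 ≤ C)
    (hmono : ∀ a b : E, ⟪G a - G b, a - b⟫ ≤ C * ‖a - b‖ ^ 2)
    (hg : ∀ w, HasGradientAt h (G w) w) (x y : E) :
    h y ≤ h x + ⟪G x, y - x⟫ + C / 2 * ‖y - x‖ ^ 2 := by
  set v := y - x with hv
  set ψ : ℝ → ℝ := fun t => h (x + t • v) - t * ⟪G x, v⟫ - C / 2 * t ^ 2 * ‖v‖ ^ 2 with hψ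
  have hd : ∀ t : ℝ,
      HasDerivAt ψ (⟪G (x + t • v), v⟫ - ⟪G x, v⟫ - C * t * ‖v‖ ^ 2) t := by
    intro t
    have h1 := aux_line_deriv h G hg x v t
    have h2 : HasDerivAt (fun t : ℝ => t * ⟪G x, v⟫) ⟪G x, v⟫ t := by
      simpa using (hasDerivAt_id t).mul_const ⟪G x, v⟫
    have h3 : HasDerivAt (fun t : ℝ => C / 2 * t ^ 2 * ‖v‖ ^ 2) (C * t * ‖v‖ ^ 2) t := by
      have := ((hasDerivAt_pow 2 t).const_mul (C / 2)).mul_const (‖v‖ ^ 2)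
      refine this.congr_deriv ?_
      ring
    exact (h1.sub h2).sub h3
  have hanti : AntitoneOn ψ (Set.Icc 0 1) := by
    apply antitoneOn_of_deriv_nonpos (convex_Icc 0 1)
    · exact fun t _ => (hd t).continuousAt.continuousWithinAt
    · exact fun t _ => (hd t).differentiableAt.differentiableWithinAt
    · intro t ht
      rw [interior_Icc] at ht
      rw [(hd t).deriv]
      have ht0 : 0 < t := ht.1
      have hm := hmono (x + t • v) x
      have hsub : (x + t • v) - x = t • v := by abel
      rw [hsub, inner_sub_left, real_inner_smul_right, real_inner_smul_right] at hm
      have hn : ‖t • v‖ ^ 2 = t ^ 2 * ‖v‖ ^ 2 := by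
        rw [norm_smul, mul_pow, Real.norm_eq_abs, sq_abs]
      rw [hn] at hm
      nlinarith
  have h01 := hanti (Set.mem_Icc.2 ⟨le_refl 0, zero_le_one⟩)
    (Set.mem_Icc.2 ⟨zero_le_one, le_refl 1⟩) zero_le_one
  have e1 : x + (1:ℝ) • v = y := by rw [one_smul, hv]; abel
  have e0 : x + (0:ℝ) • v = x := by simp
  simp only [hψ, e1, e0, one_pow, one_mul, mul_zero, zero_mul, sub_zero,
    ne_eq, zero_pow, mul_one] at h01
  norm_num at h01
  linarith

lemma aux_key (h : E → ℝ) (G : E → E) (C : ℝ) (hC : 0 < C)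
    (hconv : ConvexOn ℝ Set.univ h)
    (hmono : ∀ a b : E, ⟪G a - G b, a - b⟫ ≤ C * ‖a - b‖ ^ 2)
    (hg : ∀ w, HasGradientAt h (G w) w) (x y : E) :
    1 / (2 * C) * ‖G x - G y‖ ^ 2 ≤ h x - h y - ⟪G y, x - y⟫ := by
  set φ : E → ℝ := fun w => h w + ⟪-G y, w⟫ with hφ
  set Gφ : E → E := fun w => G w - G y with hGφ
  have hφg : ∀ w, HasGradientAt φ (Gφ w) w := by
    intro w
    rw [hasGradientAt_iff_hasFDerivAt]
    have h1 := (hg w).hasFDerivAt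
    have h2 := (aux_inner_grad (-G y) w).hasFDerivAt
    have := h1.add h2
    refine this.congr_fderiv ?_
    symm
    simp only [hGφ]
    rw [sub_eq_add_neg, map_add, map_neg]
  have hφconv : ConvexOn ℝ Set.univ φ := by
    refine hconv.add ((innerSL ℝ (-G y)).toLinearMap.convexOn convex_univ)
  have hφmono : ∀ a b : E, ⟪Gφ a - Gφ b, a - b⟫ ≤ C * ‖a - b‖ ^ 2 := by
    intro a b
    have : Gφ a - Gφ b = G a - G b := by show (G a - G y) - (G b - G y) = G a - G b; abel
    rw [this]
    exact hmono a b
  set d := G x - G y with hd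
  set z := x - C⁻¹ • d with hz
  have h1 := aux_grad_ineq φ Gφ hφconv hφg y z
  have hGy : Gφ y = 0 := by simp [hGφ]
  rw [hGy, inner_zero_left, add_zero] at h1
  have h2 := aux_descent φ Gφ C hC.le hφmono hφg x z
  have hzx : z - x = -(C⁻¹ • d) := by rw [hz]; abel
  have hGx : Gφ x = d := rfl
  rw [hzx, hGx] at h2
  have hin : ⟪d, -(C⁻¹ • d)⟫ = -(C⁻¹ * ‖d‖ ^ 2) := by
    rw [inner_neg_right, real_inner_smul_right, real_inner_self_eq_norm_sq]
  have hnn : ‖-(C⁻¹ • d)‖ ^ 2 = C⁻¹ ^ 2 * ‖d‖ ^ 2 := by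
    rw [norm_neg, norm_smul, mul_pow, Real.norm_eq_abs, sq_abs]
  rw [hin, hnn] at h2
  have hφxy : φ x - φ y = h x - h y - ⟪G y, x - y⟫ := by
    simp only [hφ, inner_neg_left, inner_sub_right]
    ring
  have hcomb : φ y ≤ φ x - 1 / (2 * C) * ‖d‖ ^ 2 := by
    have hCne : C ≠ 0 := ne_of_gt hC
    have heq : φ x + -(C⁻¹ * ‖d‖ ^ 2) + C / 2 * (C⁻¹ ^ 2 * ‖d‖ ^ 2)
        = φ x - 1 / (2 * C) * ‖d‖ ^ 2 := by
      field_simp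
      ring
    rw [heq] at h2
    exact le_trans h1 h2
  have h3 : 1 / (2 * C) * ‖d‖ ^ 2 ≤ φ x - φ y := by
    clear_value φ Gφ d z
    linarith [hcomb]
  rw [hφxy] at h3
  exact h3

end Aux

theorem strongly_convex_smooth_interpolation
    {n : ℕ} (f : EuclideanSpace ℝ (Fin n) → ℝ)
    (g : EuclideanSpace ℝ (Fin n) → EuclideanSpace ℝ (Fin n))
    (μ L : ℝ) (hμ : 0 ≤ μ) (hμL : μ < L)
    (hsconv : ConvexOn ℝ Set.univ (fun x => f x - μ / 2 * ‖x‖ ^ 2))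
    (hgrad : ∀ x, HasGradientAt f (g x) x)
    (hlip : ∀ x y, ‖g x - g y‖ ≤ L * ‖x - y‖) :
    ∀ x y, f x - f y - ⟪g y, x - y⟫ ≥
      (1 / (2 * (1 - μ / L))) *
        ((1 / L) * ‖g x - g y‖ ^ 2 + μ * ‖x - y‖ ^ 2
          - (2 * μ / L) * ⟪g y - g x, y - x⟫) := by
  intro x y
  have hL : 0 < L := lt_of_le_of_lt hμ hμL
  set h : EuclideanSpace ℝ (Fin n) → ℝ := fun w => f w - μ / 2 * ‖w‖ ^ 2 with hh
  set G : EuclideanSpace ℝ (Fin n) → EuclideanSpace ℝ (Fin n) := fun w => g w - μ • w with hG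
  have hgh : ∀ w, HasGradientAt h (G w) w := by
    intro w
    rw [hasGradientAt_iff_hasFDerivAt]
    have h1 := (hgrad w).hasFDerivAt
    have h2 : HasFDerivAt (fun z : EuclideanSpace ℝ (Fin n) => μ / 2 * ‖z‖ ^ 2)
        ((μ / 2) • (2 • (innerSL ℝ w))) w := by
      have := (hasStrictFDerivAt_norm_sq w).hasFDerivAt
      exact this.const_smul (μ / 2)
    have := h1.sub h2
    refine this.congr_fderiv ?_
    symm
    ext z
    have h2app : (((μ / 2) • 2 • (innerSL ℝ) w) : EuclideanSpace ℝ (Fin n) →L[ℝ] ℝ) z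
        = μ * ⟪w, z⟫ := by
      rw [ContinuousLinearMap.smul_apply, ContinuousLinearMap.smul_apply]
      simp only [innerSL_apply_apply, smul_eq_mul, nsmul_eq_mul, Nat.cast_ofNat]
      ring
    rw [ContinuousLinearMap.sub_apply, h2app, InnerProductSpace.toDual_apply_apply,
      InnerProductSpace.toDual_apply_apply]
    simp only [hG, inner_sub_left, real_inner_smul_left]
  have hmono : ∀ a b : EuclideanSpace ℝ (Fin n),
      ⟪G a - G b, a - b⟫ ≤ (L - μ) * ‖a - b‖ ^ 2 := by
    intro a b
    have e : G a - G b = (g a - g b) - μ • (a - b) := by rw [hG]; simp [smul_sub]; abel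
    rw [e, inner_sub_left, real_inner_smul_left, real_inner_self_eq_norm_sq]
    have := real_inner_le_norm (g a - g b) (a - b)
    have hl := hlip a b
    nlinarith [norm_nonneg (a - b), norm_nonneg (g a - g b)]
  have key := aux_key h G (L - μ) (by linarith) hsconv hmono hgh x y
  -- expand
  have eh : h x - h y = f x - f y - μ / 2 * (‖x‖ ^ 2 - ‖y‖ ^ 2) := by rw [hh]; ring
  have eG : ⟪G y, x - y⟫ = ⟪g y, x - y⟫ - μ * ⟪y, x - y⟫ := by
    simp only [hG, inner_sub_left, real_inner_smul_left]
  have eGn : ‖G x - G y‖ ^ 2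
      = ‖g x - g y‖ ^ 2 - 2 * μ * ⟪g x - g y, x - y⟫ + μ ^ 2 * ‖x - y‖ ^ 2 := by
    have e : G x - G y = (g x - g y) - μ • (x - y) := by rw [hG]; simp [smul_sub]; abel
    rw [e, norm_sub_sq_real, real_inner_smul_right, norm_smul, mul_pow, Real.norm_eq_abs, sq_abs]
    ring
  have exy : ‖x - y‖ ^ 2 = ‖x‖ ^ 2 - ‖y‖ ^ 2 - 2 * ⟪y, x - y⟫ := by
    rw [norm_sub_sq_real, inner_sub_right, real_inner_self_eq_norm_sq, real_inner_comm]
    ring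
  have esym : ⟪g y - g x, y - x⟫ = ⟪g x - g y, x - y⟫ := by
    rw [← inner_neg_neg, neg_sub, neg_sub]
  rw [eh, eG, eGn] at key
  rw [esym]
  have hLne : L ≠ 0 := ne_of_gt hL
  have hLμne : L - μ ≠ 0 := sub_ne_zero.2 (ne_of_gt hμL)
  have hfactor : 1 / (2 * (1 - μ / L)) = L / (2 * (L - μ)) := by
    field_simp
  rw [hfactor, ge_iff_le]
  set a := ‖g x - g y‖ ^ 2 with ha
  set b := ‖x - y‖ ^ 2 with hb
  set c := (⟪g x - g y, x - y⟫ : ℝ) with hc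
  set p := (⟪y, x - y⟫ : ℝ) with hp
  set S := (⟪g y, x - y⟫ : ℝ) with hS
  have heq : L / (2 * (L - μ)) * (1 / L * a + μ * b - 2 * μ / L * c)
      = 1 / (2 * (L - μ)) * (a - 2 * μ * c + μ ^ 2 * b) + μ / 2 * b := by
    field_simp
    ring
  have exymu : μ * b = μ * ‖x‖ ^ 2 - μ * ‖y‖ ^ 2 - 2 * (μ * p) := by rw [exy]; ring
  linarith [key, heq, exymu]
end

section
/- Let f : ℝⁿ → ℝ be convex, L-smooth with component Lipschitz constants bounded by ℓ_max, attaining its minimum f⋆, and let x⁺ = x - (1/ℓ_max)[∇f(x)]ᵢ eᵢ with i uniform random in {1,…,n}. Then E[f(x⁺)] ≤ f(x) - (1/(2 n ℓ_max)) ‖∇f(x)‖². -/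
lemma descent1d (φ φ' : ℝ → ℝ) (hd : ∀ s, HasDerivAt φ (φ' s) s) (ℓ : ℝ) (hℓ : 0 ≤ ℓ)
    (hlip : ∀ a b, |φ' a - φ' b| ≤ ℓ * |a - b|) (t : ℝ) :
    φ t ≤ φ 0 + φ' 0 * t + ℓ / 2 * t ^ 2 := by
  have hcont : Continuous φ' := by
    refine (LipschitzWith.of_dist_le_mul (K := Real.toNNReal ℓ) fun a b => ?_).continuous
    rw [Real.dist_eq, Real.dist_eq, Real.coe_toNNReal ℓ hℓ]
    exact hlip a b
  have hint : (∫ s in (0:ℝ)..t, φ' s) = φ t - φ 0 :=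
    intervalIntegral.integral_eq_sub_of_hasDerivAt (fun s _ => hd s)
      (hcont.intervalIntegrable 0 t)
  have hI1 : IntervalIntegrable (fun s => φ' s - φ' 0) MeasureTheory.volume 0 t :=
    ((hcont.sub continuous_const).intervalIntegrable 0 t)
  have hI2 : IntervalIntegrable (fun s : ℝ => ℓ * s) MeasureTheory.volume 0 t :=
    ((continuous_const.mul continuous_id).intervalIntegrable 0 t)
  have key : (∫ s in (0:ℝ)..t, (φ' s - φ' 0)) ≤ ∫ s in (0:ℝ)..t, ℓ * s := by
    rcases le_or_gt 0 t with ht | ht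
    · refine intervalIntegral.integral_mono_on ht hI1 hI2 fun s hs => ?_
      have h1 := (abs_le.mp (hlip s 0)).2
      have h2 : ℓ * |s - 0| = ℓ * s := by
        rw [sub_zero, abs_of_nonneg hs.1]
      linarith
    · rw [intervalIntegral.integral_symm, intervalIntegral.integral_symm t 0]
      refine neg_le_neg ?_
      refine intervalIntegral.integral_mono_on ht.le hI2.symm hI1.symm fun s hs => ?_
      have h1 := (abs_le.mp (hlip s 0)).1
      have h2 : ℓ * |s - 0| = -(ℓ * s) := by
        rw [sub_zero, abs_of_nonpos hs.2]; ring
      linarith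
  have e1 : (∫ s in (0:ℝ)..t, (φ' s - φ' 0)) = (φ t - φ 0) - φ' 0 * t := by
    rw [intervalIntegral.integral_sub (hcont.intervalIntegrable 0 t)
      (intervalIntegrable_const), hint, intervalIntegral.integral_const]
    simp [mul_comm]
  have e2 : (∫ s in (0:ℝ)..t, ℓ * s) = ℓ / 2 * t ^ 2 := by
    rw [intervalIntegral.integral_const_mul, integral_id]
    ring
  rw [e1, e2] at key
  linarith

theorem randomized_cd_one_step_decrease
    {n : ℕ} (hn : 0 < n) (f : EuclideanSpace ℝ (Fin n) → ℝ)
    (g : EuclideanSpace ℝ (Fin n) → EuclideanSpace ℝ (Fin n))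
    (hconv : ConvexOn ℝ Set.univ f)
    (hgrad : ∀ x, HasGradientAt f (g x) x)
    (ℓmax : ℝ) (hℓ : 0 < ℓmax)
    (hlip : ∀ (i : Fin n) (y : EuclideanSpace ℝ (Fin n)) (t : ℝ),
      |g (y + t • EuclideanSpace.single i 1) i - g y i| ≤ ℓmax * |t|)
    (hmin : ∃ xstar : EuclideanSpace ℝ (Fin n), ∀ y, f xstar ≤ f y)
    (x : EuclideanSpace ℝ (Fin n)) :
    (1 / n : ℝ) * ∑ i, f (x - (ℓmax⁻¹ * g x i) • EuclideanSpace.single i 1) ≤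
      f x - (1 / (2 * n * ℓmax)) * ‖g x‖ ^ 2 := by
  have step : ∀ i : Fin n,
      f (x - (ℓmax⁻¹ * g x i) • EuclideanSpace.single i 1) ≤
        f x - (1 / (2 * ℓmax)) * (g x i) ^ 2 := by
    intro i
    set v := EuclideanSpace.single i (1:ℝ) with hv
    set φ : ℝ → ℝ := fun s => f (x + s • v) with hφ
    set φ' : ℝ → ℝ := fun s => g (x + s • v) i with hφ'
    have hd : ∀ s, HasDerivAt φ (φ' s) s := by
      intro s
      have hc : HasDerivAt (fun t : ℝ => x + t • v) v s := by
        simpa using ((hasDerivAt_id s).smul_const v).const_add x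
      have := ((hgrad (x + s • v)).hasFDerivAt).comp_hasDerivAt s hc
      refine HasDerivAt.congr_deriv this (Eq.symm ?_)
      simp only [InnerProductSpace.toDual_apply_apply]
      rw [real_inner_comm, hv, EuclideanSpace.inner_single_left]
      simp [hφ', hv]
    have hlip' : ∀ a b, |φ' a - φ' b| ≤ ℓmax * |a - b| := by
      intro a b
      have := hlip i (x + b • v) (a - b)
      have e : x + b • v + (a - b) • v = x + a • v := by
        rw [add_assoc, ← add_smul]; ring_nf
      rw [e] at this
      exact this
    have h := descent1d φ φ' hd ℓmax hℓ.le hlip' (-(ℓmax⁻¹ * g x i))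
    have hφ0 : φ 0 = f x := by simp [hφ]
    have hφ'0 : φ' 0 = g x i := by simp [hφ']
    have heq : φ (-(ℓmax⁻¹ * g x i)) =
        f (x - (ℓmax⁻¹ * g x i) • EuclideanSpace.single i 1) := by
      simp [hφ, hv, sub_eq_add_neg, neg_smul]
    rw [hφ0, hφ'0, heq] at h
    have hℓne : ℓmax ≠ 0 := hℓ.ne'
    calc f (x - (ℓmax⁻¹ * g x i) • EuclideanSpace.single i 1) ≤
        f x + g x i * -(ℓmax⁻¹ * g x i) + ℓmax / 2 * (-(ℓmax⁻¹ * g x i)) ^ 2 := h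
      _ = f x - (1 / (2 * ℓmax)) * (g x i) ^ 2 := by field_simp; ring
  have hsum : ∑ i, f (x - (ℓmax⁻¹ * g x i) • EuclideanSpace.single i 1) ≤
      (n : ℝ) * f x - (1 / (2 * ℓmax)) * ‖g x‖ ^ 2 := by
    have hnorm : ‖g x‖ ^ 2 = ∑ i, (g x i) ^ 2 := by
      rw [EuclideanSpace.norm_eq, Real.sq_sqrt (by positivity)]
      simp [sq_abs]
    calc ∑ i, f (x - (ℓmax⁻¹ * g x i) • EuclideanSpace.single i 1)
        ≤ ∑ i : Fin n, (f x - (1 / (2 * ℓmax)) * (g x i) ^ 2) :=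
          Finset.sum_le_sum fun i _ => step i
      _ = (n : ℝ) * f x - (1 / (2 * ℓmax)) * ‖g x‖ ^ 2 := by
          rw [Finset.sum_sub_distrib, Finset.sum_const, ← Finset.mul_sum, hnorm]
          simp [mul_comm]
  have hn' : (0:ℝ) < n := by exact_mod_cast hn
  have h2 : (1 / n : ℝ) * ∑ i, f (x - (ℓmax⁻¹ * g x i) • EuclideanSpace.single i 1)
      ≤ (1 / n : ℝ) * ((n : ℝ) * f x - (1 / (2 * ℓmax)) * ‖g x‖ ^ 2) := by
    apply mul_le_mul_of_nonneg_left hsum (by positivity)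
  calc (1 / n : ℝ) * ∑ i, f (x - (ℓmax⁻¹ * g x i) • EuclideanSpace.single i 1)
      ≤ (1 / n : ℝ) * ((n : ℝ) * f x - (1 / (2 * ℓmax)) * ‖g x‖ ^ 2) := h2
    _ = f x - (1 / (2 * n * ℓmax)) * ‖g x‖ ^ 2 := by
        field_simp
end

section
/- Let f be μ-strongly convex (μ > 0) with minimum value f⋆ attained at x⋆, and L-smooth with component Lipschitz constants bounded by ℓ_max. One step of randomized coordinate descent x⁺ = x - (1/ℓ_max)[∇f(x)]ᵢ eᵢ with i uniform on {1,…,n} satisfies E[f(x⁺)] - f⋆ ≤ (1 - μ/(n ℓ_max)) (f(x) - f⋆). -/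
set_option maxHeartbeats 1000000

open InnerProductSpace

private lemma tangent_le {φ : ℝ → ℝ} (hc : ConvexOn ℝ Set.univ φ) {a b d : ℝ}
    (hd : HasDerivAt φ d a) : φ a + d * (b - a) ≤ φ b := by
  rcases lt_trichotomy a b with h | h | h
  · have hs := hc.le_slope_of_hasDerivAt (Set.mem_univ a) (Set.mem_univ b) h hd
    rw [slope_def_field, div_eq_inv_mul] at hs
    have hba : (0:ℝ) < b - a := sub_pos.2 h
    have := (le_inv_mul_iff₀ hba).1 hs
    nlinarith
  · simp [h]
  · have hs := hc.slope_le_of_hasDerivAt (Set.mem_univ b) (Set.mem_univ a) h hd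
    rw [slope_def_field, div_eq_inv_mul] at hs
    have hab : (0:ℝ) < a - b := sub_pos.2 h
    have := (inv_mul_le_iff₀ hab).1 hs
    nlinarith

private lemma quad_upper {φ dφ : ℝ → ℝ} {ℓ : ℝ}
    (hd : ∀ s, HasDerivAt φ (dφ s) s)
    (hlip : ∀ s, |dφ s - dφ 0| ≤ ℓ * |s|) (t : ℝ) :
    φ t ≤ φ 0 + dφ 0 * t + ℓ / 2 * t ^ 2 := by
  set ψ : ℝ → ℝ := fun s => φ 0 + dφ 0 * s + ℓ / 2 * s ^ 2 - φ s with hψdef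
  have hdψ : ∀ s, HasDerivAt ψ (dφ 0 + ℓ * s - dφ s) s := by
    intro s
    have h2 : HasDerivAt (fun s : ℝ => ℓ / 2 * s ^ 2) (ℓ * s) s := by
      have := (hasDerivAt_pow 2 s).const_mul (ℓ / 2)
      refine this.congr_deriv ?_
      rw [show (2:ℕ) - 1 = 1 from rfl]; push_cast; ring
    have h1 : HasDerivAt (fun s : ℝ => φ 0 + dφ 0 * s + ℓ / 2 * s ^ 2) (dφ 0 + ℓ * s) s := by
      have h0 : HasDerivAt (fun s : ℝ => φ 0 + dφ 0 * s) (dφ 0) s := by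
        simpa using ((hasDerivAt_id s).const_mul (dφ 0)).const_add (φ 0)
      exact h0.add h2
    exact h1.sub (hd s)
  have hψ0 : ψ 0 = 0 := by simp [hψdef]
  have hcont : Continuous ψ := by
    have : Differentiable ℝ ψ := fun s => (hdψ s).differentiableAt
    exact this.continuous
  rcases le_or_gt 0 t with ht | ht
  · have mono : MonotoneOn ψ (Set.Icc 0 t) := by
      apply monotoneOn_of_deriv_nonneg (convex_Icc 0 t) hcont.continuousOn
      · intro s hs
        exact (hdψ s).differentiableAt.differentiableWithinAt
      · intro s hs
        rw [interior_Icc] at hs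
        rw [(hdψ s).deriv]
        have h := abs_le.1 (hlip s)
        rw [abs_of_pos hs.1] at h
        linarith [h.2]
    have h := mono (Set.left_mem_Icc.2 ht) (Set.right_mem_Icc.2 ht) ht
    rw [hψ0] at h
    simpa [hψdef] using h
  · have anti : AntitoneOn ψ (Set.Icc t 0) := by
      apply antitoneOn_of_deriv_nonpos (convex_Icc t 0) hcont.continuousOn
      · intro s hs
        exact (hdψ s).differentiableAt.differentiableWithinAt
      · intro s hs
        rw [interior_Icc] at hs
        rw [(hdψ s).deriv]
        have h := abs_le.1 (hlip s)
        rw [abs_of_neg hs.2] at h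
        linarith [h.1]
    have h := anti (Set.left_mem_Icc.2 ht.le) (Set.right_mem_Icc.2 ht.le) ht.le
    rw [hψ0] at h
    simpa [hψdef] using h

private lemma grad_tangent {E : Type*} [NormedAddCommGroup E] [InnerProductSpace ℝ E]
    [CompleteSpace E] {h : E → ℝ} {G x : E}
    (hc : ConvexOn ℝ Set.univ h) (hG : HasGradientAt h G x) (y : E) :
    h x + (inner ℝ G (y - x) : ℝ) ≤ h y := by
  set φ : ℝ → ℝ := fun t => h (x + t • (y - x)) with hφdef
  have hline : ∀ t : ℝ, HasDerivAt (fun t : ℝ => x + t • (y - x)) (y - x) t := fun t => by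
    simpa using ((hasDerivAt_id t).smul_const (y - x)).const_add x
  have hφ : HasDerivAt φ (inner ℝ G (y - x) : ℝ) 0 := by
    have hF : HasFDerivAt h (toDual ℝ E G) x := hG
    have hF' : HasFDerivAt h (toDual ℝ E G) ((fun t : ℝ => x + t • (y - x)) 0) := by
      simpa using hF
    have := hF'.comp_hasDerivAt 0 (hline 0)
    simp only [toDual_apply_apply] at this; exact this
  have hcφ : ConvexOn ℝ Set.univ φ := by
    have := hc.comp_affineMap (AffineMap.lineMap x y : ℝ →ᵃ[ℝ] E)
    have heq : (h ∘ (AffineMap.lineMap x y : ℝ →ᵃ[ℝ] E)) = φ := by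
      funext t
      simp [hφdef, AffineMap.lineMap_apply, add_comm]
    rw [heq] at this
    simpa using this
  have := tangent_le hcφ (a := 0) (b := 1) hφ
  simpa [hφdef] using this

theorem randomized_cd_strongly_convex_rate
    {n : ℕ} (hn : 0 < n) (f : EuclideanSpace ℝ (Fin n) → ℝ)
    (g : EuclideanSpace ℝ (Fin n) → EuclideanSpace ℝ (Fin n))
    (μ : ℝ) (hμ : 0 < μ)
    (hsconv : ConvexOn ℝ Set.univ (fun x => f x - μ / 2 * ‖x‖ ^ 2))
    (hgrad : ∀ x, HasGradientAt f (g x) x)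
    (ℓmax : ℝ) (hℓ : 0 < ℓmax)
    (hlip : ∀ (i : Fin n) (y : EuclideanSpace ℝ (Fin n)) (t : ℝ),
      |g (y + t • EuclideanSpace.single i 1) i - g y i| ≤ ℓmax * |t|)
    (xstar : EuclideanSpace ℝ (Fin n)) (hmin : ∀ y, f xstar ≤ f y)
    (x : EuclideanSpace ℝ (Fin n)) :
    (1 / n : ℝ) * ∑ i, f (x - (ℓmax⁻¹ * g x i) • EuclideanSpace.single i 1) - f xstar ≤
      (1 - μ / (n * ℓmax)) * (f x - f xstar) := by
  -- strong convexity gradient of h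
  have hsg : HasGradientAt (fun z => f z - μ / 2 * ‖z‖ ^ 2) (g x - μ • x) x := by
    have hF : HasFDerivAt f (toDual ℝ _ (g x)) x := hgrad x
    have hN : HasFDerivAt (fun z : EuclideanSpace ℝ (Fin n) => ‖z‖ ^ 2)
        (2 • (innerSL ℝ x)) x := (hasStrictFDerivAt_norm_sq x).hasFDerivAt
    have hN' := hN.const_mul (μ / 2)
    have := hF.sub hN'
    have heq : toDual ℝ (EuclideanSpace ℝ (Fin n)) (g x) - (μ / 2) • (2 • (innerSL ℝ x))
        = toDual ℝ (EuclideanSpace ℝ (Fin n)) (g x - μ • x) := by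
      ext v
      simp [toDual_apply_apply, inner_sub_left, real_inner_smul_left]
      ring
    rw [heq] at this
    exact this
  -- strong convexity lower bound on gradient norm
  have key : 2 * μ * (f x - f xstar) ≤ ‖g x‖ ^ 2 := by
    have H := grad_tangent hsconv hsg xstar
    have hw : ‖xstar - x‖ ^ 2 = ‖xstar‖ ^ 2 - 2 * inner ℝ xstar x + ‖x‖ ^ 2 :=
      norm_sub_sq_real xstar x
    have hinner : (inner ℝ (g x - μ • x) (xstar - x) : ℝ)
        = inner ℝ (g x) (xstar - x) - μ * (inner ℝ xstar x - ‖x‖ ^ 2) := by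
      simp only [inner_sub_left, inner_sub_right, real_inner_smul_left]
      rw [real_inner_self_eq_norm_sq, real_inner_comm x xstar]
      ring
    rw [hinner] at H
    have hcs : -(‖g x‖ * ‖xstar - x‖) ≤ (inner ℝ (g x) (xstar - x) : ℝ) :=
      (abs_le.1 (abs_real_inner_le_norm (g x) (xstar - x))).1
    have hweq : μ / 2 * ‖xstar - x‖ ^ 2
        = μ / 2 * ‖xstar‖ ^ 2 - μ * (inner ℝ xstar x : ℝ) + μ / 2 * ‖x‖ ^ 2 := by
      rw [hw]; ring
    have H2 : f x - f xstar ≤ ‖g x‖ * ‖xstar - x‖ - μ / 2 * ‖xstar - x‖ ^ 2 := by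
      linarith [H, hcs, hweq]
    nlinarith [H2, sq_nonneg (μ * ‖xstar - x‖ - ‖g x‖), norm_nonneg (xstar - x),
      norm_nonneg (g x), hμ]
  -- per-coordinate descent
  have step : ∀ i : Fin n,
      f (x - (ℓmax⁻¹ * g x i) • EuclideanSpace.single i 1) ≤
        f x - (g x i) ^ 2 / (2 * ℓmax) := by
    intro i
    set e : EuclideanSpace ℝ (Fin n) := EuclideanSpace.single i 1 with he
    set φ : ℝ → ℝ := fun t => f (x + t • e) with hφdef
    set dφ : ℝ → ℝ := fun t => g (x + t • e) i with hdφdef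
    have hline : ∀ t : ℝ, HasDerivAt (fun t : ℝ => x + t • e) e t := fun t => by
      simpa using ((hasDerivAt_id t).smul_const e).const_add x
    have hd : ∀ t, HasDerivAt φ (dφ t) t := by
      intro t
      have hF : HasFDerivAt f (toDual ℝ _ (g (x + t • e))) ((fun t : ℝ => x + t • e) t) :=
        hgrad _
      have := hF.comp_hasDerivAt t (hline t)
      have hval : (toDual ℝ (EuclideanSpace ℝ (Fin n)) (g (x + t • e))) e = dφ t := by
        simp [toDual_apply_apply, he, hdφdef, EuclideanSpace.inner_single_right]
      rw [hval] at this; exact this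
    have hlip' : ∀ s, |dφ s - dφ 0| ≤ ℓmax * |s| := by
      intro s
      have := hlip i x s
      simpa [hdφdef, he] using this
    have hq := quad_upper hd hlip' (-(ℓmax⁻¹ * g x i))
    have hφt : φ (-(ℓmax⁻¹ * g x i)) = f (x - (ℓmax⁻¹ * g x i) • e) := by
      rw [hφdef]
      simp [neg_smul, sub_eq_add_neg]
    have hφ0 : φ 0 = f x := by simp [hφdef]
    have hdφ0 : dφ 0 = g x i := by simp [hdφdef]
    rw [hφt, hφ0, hdφ0] at hq
    have harith : f x + g x i * -(ℓmax⁻¹ * g x i) + ℓmax / 2 * (-(ℓmax⁻¹ * g x i)) ^ 2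
        = f x - (g x i) ^ 2 / (2 * ℓmax) := by
      field_simp
      ring
    rw [harith] at hq
    exact hq
  -- sum up
  have hnorm : ‖g x‖ ^ 2 = ∑ i, (g x i) ^ 2 := by
    rw [EuclideanSpace.norm_eq, Real.sq_sqrt (Finset.sum_nonneg (fun i _ => sq_nonneg _))]
    simp
  have hsum : ∑ i, f (x - (ℓmax⁻¹ * g x i) • EuclideanSpace.single i 1) ≤
      (n : ℝ) * f x - (∑ i, (g x i) ^ 2) / (2 * ℓmax) := by
    calc ∑ i, f (x - (ℓmax⁻¹ * g x i) • EuclideanSpace.single i 1)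
        ≤ ∑ i : Fin n, (f x - (g x i) ^ 2 / (2 * ℓmax)) := Finset.sum_le_sum fun i _ => step i
      _ = (n : ℝ) * f x - (∑ i, (g x i) ^ 2) / (2 * ℓmax) := by
          rw [Finset.sum_sub_distrib, Finset.sum_const, Finset.card_univ, Fintype.card_fin,
            ← Finset.sum_div]
          simp [nsmul_eq_mul]
  have hnr : (0:ℝ) < n := Nat.cast_pos.2 hn
  have hA : 0 ≤ f x - f xstar := sub_nonneg.2 (hmin x)
  rw [← hnorm] at hsum
  have h2 : (1 / n : ℝ) * ∑ i, f (x - (ℓmax⁻¹ * g x i) • EuclideanSpace.single i 1)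
      ≤ f x - ‖g x‖ ^ 2 / (2 * n * ℓmax) := by
    have h := mul_le_mul_of_nonneg_left hsum (by positivity : (0:ℝ) ≤ 1 / n)
    have heq : (1 / n : ℝ) * ((n : ℝ) * f x - ‖g x‖ ^ 2 / (2 * ℓmax))
        = f x - ‖g x‖ ^ 2 / (2 * n * ℓmax) := by
      field_simp
    linarith [heq ▸ h]
  have h3 : μ * (f x - f xstar) / (n * ℓmax) ≤ ‖g x‖ ^ 2 / (2 * n * ℓmax) := by
    rw [div_le_div_iff₀ (by positivity) (by positivity)]
    have := mul_le_mul_of_nonneg_right key (le_of_lt (mul_pos hnr hℓ))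
    nlinarith [this]
  have h4 : (1 - μ / (n * ℓmax)) * (f x - f xstar)
      = (f x - f xstar) - μ * (f x - f xstar) / (n * ℓmax) := by ring
  linarith
end

section
/- For f(x) = (1/2)xᵀAx - bᵀx with A symmetric positive semidefinite with positive diagonal and D = diag(A), the gradient map x ↦ D⁻¹(Ax - b) (the gradient with respect to the inner product ⟨u,v⟩_D = Σᵢ aᵢᵢuᵢvᵢ) is Lipschitz with constant λ_max(D⁻¹A) with respect to the norm induced by ⟨·,·⟩_D. -/
open Matrix

section Aux

variable {n : ℕ}

/-- Transfer: Hermitian structure of the scaled matrix. -/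
lemma aux_posSemidef {A : Matrix (Fin n) (Fin n) ℝ} (hA : A.IsSymm)
    (hPSD : ∀ x : Fin n → ℝ, 0 ≤ x ⬝ᵥ (A *ᵥ x)) : A.PosSemidef := by
  rw [Matrix.posSemidef_iff_dotProduct_mulVec]
  constructor
  · ext i j
    simpa using congrFun (congrFun hA i) j
  · intro x
    simpa using hPSD x

lemma aux_transpose_eq {B : Matrix (Fin n) (Fin n) ℝ} (h : B.IsHermitian) : Bᵀ = B := by
  ext i j
  simpa using congrFun (congrFun h i) j

end Aux

theorem scaled_gradient_lipschitz_wrt_D_norm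
    {n : ℕ} (A : Matrix (Fin n) (Fin n) ℝ) (hA : A.IsSymm)
    (hPSD : ∀ x : Fin n → ℝ, 0 ≤ x ⬝ᵥ (A *ᵥ x))
    (hdiag : ∀ i, 0 < A i i)
    (b : Fin n → ℝ)
    (D : Matrix (Fin n) (Fin n) ℝ) (hD : D = Matrix.diagonal (fun i => A i i))
    (lmax : ℝ)
    (hlmax : IsGreatest {μ : ℝ | ∃ v : Fin n → ℝ, v ≠ 0 ∧ (D⁻¹ * A) *ᵥ v = μ • v} lmax) :
    ∀ x y : Fin n → ℝ,
      Real.sqrt (∑ i, A i i * ((D⁻¹ *ᵥ (A *ᵥ x - b)) i - (D⁻¹ *ᵥ (A *ᵥ y - b)) i) ^ 2)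
        ≤ lmax * Real.sqrt (∑ i, A i i * (x i - y i) ^ 2) := by
  classical
  have hs : ∀ i, (0:ℝ) < Real.sqrt (A i i) := fun i => Real.sqrt_pos.mpr (hdiag i)
  have hs2 : ∀ i, Real.sqrt (A i i) * Real.sqrt (A i i) = A i i :=
    fun i => Real.mul_self_sqrt (hdiag i).le
  set E : Matrix (Fin n) (Fin n) ℝ := Matrix.diagonal (fun i => (Real.sqrt (A i i))⁻¹) with hE
  have hEt : Eᴴ = E := by
    rw [hE]
    simp [Matrix.diagonal_conjTranspose]
  set B : Matrix (Fin n) (Fin n) ℝ := E * A * E with hBdef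
  have hApsd : A.PosSemidef := aux_posSemidef hA hPSD
  have hBpsd : B.PosSemidef := by
    have := hApsd.mul_mul_conjTranspose_same E
    rwa [hEt] at this
  have hBh : B.IsHermitian := hBpsd.isHermitian
  -- D⁻¹ is the diagonal of inverses
  have hDinv : D⁻¹ = Matrix.diagonal (fun i => (A i i)⁻¹) := by
    apply Matrix.inv_eq_right_inv
    rw [hD, Matrix.diagonal_mul_diagonal]
    have : (fun i => A i i * (A i i)⁻¹) = fun _ => (1:ℝ) :=
      funext fun i => mul_inv_cancel₀ (hdiag i).ne'
    rw [this, Matrix.diagonal_one]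
  have hEE : E * E = D⁻¹ := by
    rw [hDinv, hE, Matrix.diagonal_mul_diagonal]
    have : (fun i => (Real.sqrt (A i i))⁻¹ * (Real.sqrt (A i i))⁻¹)
        = fun i => (A i i)⁻¹ := funext fun i => by rw [← mul_inv, hs2 i]
    rw [this]
  -- lmax is nonnegative
  obtain ⟨v0, hv0ne, hv0⟩ := hlmax.1
  have hlmax0 : 0 ≤ lmax := by
    have hAv : A *ᵥ v0 = lmax • (D *ᵥ v0) := by
      have hdet : IsUnit D.det := by
        rw [hD, Matrix.det_diagonal]
        exact (Finset.prod_pos (fun i _ => hdiag i)).ne'.isUnit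
      calc A *ᵥ v0 = (D * (D⁻¹ * A)) *ᵥ v0 := by
            rw [← Matrix.mul_assoc, Matrix.mul_nonsing_inv _ hdet, Matrix.one_mul]
        _ = D *ᵥ ((D⁻¹ * A) *ᵥ v0) := by rw [← Matrix.mulVec_mulVec]
        _ = D *ᵥ (lmax • v0) := by rw [hv0]
        _ = lmax • (D *ᵥ v0) := by rw [Matrix.mulVec_smul]
    have h1 : (0:ℝ) ≤ lmax * (v0 ⬝ᵥ (D *ᵥ v0)) := by
      have := hPSD v0
      rwa [hAv, dotProduct_smul, smul_eq_mul] at this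
    have h2 : 0 < v0 ⬝ᵥ (D *ᵥ v0) := by
      rw [hD]
      obtain ⟨j, hj⟩ := Function.ne_iff.mp hv0ne
      have hj' : v0 j ≠ 0 := by simpa using hj
      have : ∀ i, v0 i * ((Matrix.diagonal fun i => A i i) *ᵥ v0) i = A i i * (v0 i)^2 := by
        intro i; rw [Matrix.mulVec_diagonal]; ring
      rw [dotProduct]
      calc (0:ℝ) < A j j * (v0 j)^2 :=
            mul_pos (hdiag j) (by positivity)
        _ ≤ ∑ i, v0 i * ((Matrix.diagonal fun i => A i i) *ᵥ v0) i := by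
            rw [Finset.sum_congr rfl (fun i _ => this i)]
            exact Finset.single_le_sum (fun i _ => mul_nonneg (hdiag i).le (sq_nonneg _))
              (Finset.mem_univ j)
    nlinarith
  -- every eigenvalue of B is at most lmax
  have heig_le : ∀ i, hBh.eigenvalues i ≤ lmax := by
    intro i
    apply hlmax.2
    set v : Fin n → ℝ := ⇑(hBh.eigenvectorBasis i) with hv
    have hvB : B *ᵥ v = hBh.eigenvalues i • v := hBh.mulVec_eigenvectorBasis i
    have hvne : v ≠ 0 := by
      intro h
      apply hBh.eigenvectorBasis.orthonormal.ne_zero i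
      ext j
      exact congrFun h j
    refine ⟨E *ᵥ v, ?_, ?_⟩
    · intro h
      apply hvne
      funext j
      have := congrFun h j
      rw [hE, Matrix.mulVec_diagonal] at this
      have hne : (Real.sqrt (A j j))⁻¹ ≠ 0 := inv_ne_zero (hs j).ne'
      simpa [hne] using this
    · calc (D⁻¹ * A) *ᵥ (E *ᵥ v) = ((E * E * A) * E) *ᵥ v := by
            rw [Matrix.mulVec_mulVec, hEE]
        _ = (E * B) *ᵥ v := by congr 1; rw [hBdef]; noncomm_ring
        _ = E *ᵥ (B *ᵥ v) := by rw [← Matrix.mulVec_mulVec]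
        _ = E *ᵥ (hBh.eigenvalues i • v) := by rw [hvB]
        _ = hBh.eigenvalues i • (E *ᵥ v) := by rw [Matrix.mulVec_smul]
  have heig0 : ∀ i, 0 ≤ hBh.eigenvalues i := hBpsd.eigenvalues_nonneg
  -- lmax^2 • 1 - B * B is positive semidefinite
  set U : Matrix (Fin n) (Fin n) ℝ := (hBh.eigenvectorUnitary : Matrix (Fin n) (Fin n) ℝ)
    with hU
  have hUU : U * star U = 1 := (Matrix.mem_unitaryGroup_iff).mp hBh.eigenvectorUnitary.2
  have hUU' : star U * U = 1 := (Matrix.mem_unitaryGroup_iff').mp hBh.eigenvectorUnitary.2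
  set Λ : Matrix (Fin n) (Fin n) ℝ :=
    Matrix.diagonal (RCLike.ofReal ∘ hBh.eigenvalues) with hΛ
  have hspec : B = U * Λ * star U := hBh.spectral_theorem
  have hMpsd : (lmax ^ 2 • (1 : Matrix (Fin n) (Fin n) ℝ) - B * B).PosSemidef := by
    have hkey : lmax ^ 2 • (1 : Matrix (Fin n) (Fin n) ℝ) - B * B
        = U * (Matrix.diagonal (fun i => lmax ^ 2 - (hBh.eigenvalues i)^2)) * Uᴴ := by
      have hBB : B * B = U * (Λ * Λ) * star U := by
        rw [hspec]
        calc (U * Λ * star U) * (U * Λ * star U)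
            = U * Λ * (star U * U) * Λ * star U := by noncomm_ring
          _ = U * (Λ * Λ) * star U := by rw [hUU']; noncomm_ring
      have h1 : (lmax ^ 2 • (1 : Matrix (Fin n) (Fin n) ℝ))
          = U * (lmax ^ 2 • (1 : Matrix (Fin n) (Fin n) ℝ)) * star U := by
        rw [Matrix.mul_smul, Matrix.smul_mul, Matrix.mul_one, hUU]
      rw [hBB, h1, ← Matrix.star_eq_conjTranspose]
      rw [← Matrix.sub_mul, ← Matrix.mul_sub]
      congr 2
      rw [hΛ, Matrix.diagonal_mul_diagonal]
      ext i j
      by_cases h : i = j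
      · subst h
        simp [Matrix.diagonal_apply_eq, Matrix.one_apply_eq]
        ring
      · simp [Matrix.diagonal_apply_ne _ h, Matrix.one_apply_ne h]
    rw [hkey]
    apply Matrix.PosSemidef.mul_mul_conjTranspose_same
    rw [Matrix.posSemidef_diagonal_iff]
    intro i
    have := heig_le i
    have := heig0 i
    nlinarith
  -- key quadratic inequality
  have hkeyq : ∀ w : Fin n → ℝ, w ⬝ᵥ ((B * B) *ᵥ w) ≤ lmax ^ 2 * (w ⬝ᵥ w) := by
    intro w
    have := hMpsd.dotProduct_mulVec_nonneg w
    rw [Matrix.sub_mulVec, Matrix.smul_mulVec, Matrix.one_mulVec] at this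
    simp only [star_trivial, dotProduct_sub, dotProduct_smul, smul_eq_mul] at this
    linarith
  -- now the main computation
  intro x y
  set z : Fin n → ℝ := x - y with hz
  set w : Fin n → ℝ := fun i => Real.sqrt (A i i) * z i with hw
  have hEw : E *ᵥ w = z := by
    funext j
    rw [hE, Matrix.mulVec_diagonal, hw]
    exact inv_mul_cancel_left₀ (hs j).ne' (z j)
  have hBw : B *ᵥ w = E *ᵥ (A *ᵥ z) := by
    rw [hBdef, ← Matrix.mulVec_mulVec, ← Matrix.mulVec_mulVec, hEw]
  -- rewrite the LHS difference
  have hdiff : ∀ i, (D⁻¹ *ᵥ (A *ᵥ x - b)) i - (D⁻¹ *ᵥ (A *ᵥ y - b)) i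
      = (D⁻¹ *ᵥ (A *ᵥ z)) i := by
    intro i
    have : D⁻¹ *ᵥ (A *ᵥ x - b) - D⁻¹ *ᵥ (A *ᵥ y - b) = D⁻¹ *ᵥ (A *ᵥ z) := by
      rw [← Matrix.mulVec_sub, sub_sub_sub_cancel_right, ← Matrix.mulVec_sub, ← hz]
    exact congrFun this i
  have hterm : ∀ i, A i i * ((D⁻¹ *ᵥ (A *ᵥ x - b)) i - (D⁻¹ *ᵥ (A *ᵥ y - b)) i) ^ 2
      = ((B *ᵥ w) i)^2 := by
    intro i
    rw [hdiff i, hBw, hDinv, Matrix.mulVec_diagonal, hE, Matrix.mulVec_diagonal]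
    have hne : Real.sqrt (A i i) ≠ 0 := (hs i).ne'
    rw [← hs2 i]
    field_simp
    rw [Real.sqrt_sq (hs i).le]
    ring
  have hBt : Bᵀ = B := aux_transpose_eq hBh
  have hdp : (B *ᵥ w) ⬝ᵥ (B *ᵥ w) = w ⬝ᵥ ((B * B) *ᵥ w) := by
    nth_rewrite 1 [← hBt]
    rw [Matrix.mulVec_transpose, ← Matrix.dotProduct_mulVec, Matrix.mulVec_mulVec]
  have h1 : (B *ᵥ w) ⬝ᵥ (B *ᵥ w) ≤ lmax ^ 2 * (w ⬝ᵥ w) := by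
    rw [hdp]; exact hkeyq w
  have hrhs : ∑ i, A i i * (x i - y i) ^ 2 = w ⬝ᵥ w := by
    rw [dotProduct]
    refine Finset.sum_congr rfl fun i _ => ?_
    have hzi : z i = x i - y i := rfl
    rw [hw]
    simp only []
    rw [hzi]
    nlinarith [hs2 i]
  have hlhs : ∑ i, A i i * ((D⁻¹ *ᵥ (A *ᵥ x - b)) i - (D⁻¹ *ᵥ (A *ᵥ y - b)) i) ^ 2
      = (B *ᵥ w) ⬝ᵥ (B *ᵥ w) := by
    rw [dotProduct]
    refine Finset.sum_congr rfl fun i _ => ?_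
    rw [hterm i, sq]
  rw [hlhs, hrhs]
  calc Real.sqrt ((B *ᵥ w) ⬝ᵥ (B *ᵥ w)) ≤ Real.sqrt (lmax ^ 2 * (w ⬝ᵥ w)) :=
        Real.sqrt_le_sqrt h1
    _ = lmax * Real.sqrt (w ⬝ᵥ w) := by
        rw [Real.sqrt_mul (sq_nonneg lmax), Real.sqrt_sq hlmax0]
end
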